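/- Let 2 ≤ l ≤ n, let λ = (λ_1,…,λ_n) ∈ Γ_l, and let p ≠ q be two indices. Then σ_{l−1}(λ|p) σ_{l−1}(λ|q) − σ_l(λ) σ_{l−2}(λ|pq) = σ_{l−1}(λ|pq)^2 − σ_l(λ|pq) σ_{l−2}(λ|pq), and this quantity is nonnegative. -/

import Mathlib

open Finset

/-- `esymmOn S m lam` is the m-th elementary symmetric polynomial of the
components of `lam` with indices in `S` (zero for `m < 0`, and automatically
zero for `m > |S|`). For `S = {i}ᶜ` this is `σ_m(λ|i)`, etc. -/
noncomputable def esymmOn {n : ℕ} (S : Finset (Fin n)) (m : ℤ) (lam : Fin n → ℝ) : ℝ :=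
  if m < 0 then 0 else ∑ s ∈ S.powersetCard m.toNat, ∏ i ∈ s, lam i

/-- `σ_m(λ)` for the full vector. -/
noncomputable def esymm {n : ℕ} (m : ℤ) (lam : Fin n → ℝ) : ℝ :=
  esymmOn Finset.univ m lam

/-- Garding's cone `Γ_k`. -/
def GammaCone {n : ℕ} (k : ℕ) (lam : Fin n → ℝ) : Prop :=
  ∀ j : ℕ, 1 ≤ j → j ≤ k → 0 < esymm (j : ℤ) lam

/-!
Expanding `σ_m(λ|p)`, `σ_m(λ|q)` and `σ_m(λ)` by the recursion
`σ_m(S ∪ {i}) = σ_m(S) + λ_i σ_{m-1}(S)` over `S = {p, q}ᶜ` gives the identity, and its right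
side is nonnegative by Newton's inequality `e_k e_{k+2} ≤ e_{k+1}²` for `(λ|pq)`.
Newton's inequality is proved in the classical way: `∏ (X + r)` splits over `ℝ`, by Rolle's
theorem so do its derivatives, and reversal preserves splitting. Differentiating `b` times,
reversing and differentiating `k` times leaves a split quadratic whose coefficients are `e_k`,
`e_{k+1}`, `e_{k+2}` up to factorial weights; its discriminant is nonnegative.
-/

open Polynomial Nat

namespace Polynomial

theorem Splits.derivative {f : ℝ[X]} (hf : f.Splits) : f.derivative.Splits := by
  rw [splits_iff_card_roots] at hf ⊢
  have hrolle := f.card_roots_le_derivative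
  have hdeg := natDegree_derivative_le f
  have hcard := f.derivative.card_roots'
  omega

theorem Splits.iterate_derivative {f : ℝ[X]} (hf : f.Splits) (k : ℕ) :
    (Polynomial.derivative^[k] f).Splits := by
  induction k with
  | zero => exact hf
  | succ k ih => rw [Function.iterate_succ_apply']; exact ih.derivative

theorem Splits.reverse {K : Type*} [Field K] {f : K[X]} (hf : f.Splits) : f.reverse.Splits := by
  induction hf using Submonoid.closure_induction with
  | mem g hg =>
    refine Splits.of_natDegree_le_one ((reverse_natDegree_le g).trans ?_)
    rcases hg with ⟨a, rfl⟩ | ⟨a, rfl⟩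
    · exact (natDegree_C a).trans_le zero_le_one
    · exact natDegree_add_C.trans_le natDegree_X_le
  | one => rw [← C_1, reverse_C]; exact Splits.C 1
  | mul f g _ _ hf hg => rw [reverse_mul_of_domain]; exact hf.mul hg

theorem Splits.discrim_nonneg {K : Type*} [Field K] [LinearOrder K] [IsStrictOrderedRing K]
    {f : K[X]} (hf : f.Splits) (hdeg : f.natDegree ≤ 2) :
    0 ≤ discrim (f.coeff 2) (f.coeff 1) (f.coeff 0) := by
  rcases hdeg.lt_or_eq with hlt | hdeg_eq
  · rw [coeff_eq_zero_of_natDegree_lt hlt, discrim, mul_zero, zero_mul, sub_zero]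
    exact sq_nonneg _
  obtain ⟨x, hx⟩ := hf.exists_eval_eq_zero fun h => by
    have := natDegree_eq_of_degree_eq_some (n := 0) h
    omega
  rw [eval_eq_sum_range' (n := 3) (by omega), Finset.sum_range_succ, Finset.sum_range_succ,
    Finset.sum_range_one] at hx
  rw [discrim_eq_sq_of_quadratic_eq_zero (x := x) (by linear_combination hx)]
  exact sq_nonneg _

end Polynomial

theorem Nat.descFactorial_add_one_sq_le (n : ℕ) :
    (n + 1).descFactorial n ^ 2 ≤ 2 * (n ! * (n + 2).descFactorial n) := by
  rw [← descFactorial_self]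
  have h1 := succ_descFactorial n n
  have h2 := succ_descFactorial (n + 1) n
  rw [show n + 1 - n = 1 by omega] at h1
  rw [show n + 1 + 1 - n = 2 by omega] at h2
  nlinarith

namespace Multiset

section CommSemiring

variable {R : Type*} [CommSemiring R]

@[simp]
theorem esymm_zero (s : Multiset R) : s.esymm 0 = 1 := by
  simp [esymm]

theorem esymm_cons_succ (a : R) (s : Multiset R) (k : ℕ) :
    (a ::ₘ s).esymm (k + 1) = s.esymm (k + 1) + a * s.esymm k := by
  simp [esymm, powersetCard_cons, map_map, sum_map_mul_left]

theorem esymm_eq_zero_of_card_lt {s : Multiset R} {k : ℕ} (h : card s < k) : s.esymm k = 0 := by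
  simp [esymm, powersetCard_eq_empty k h]

end CommSemiring

section CharZero

variable {R : Type*} [CommRing R] [CharZero R]

theorem natDegree_iterate_derivative_prod_X_add_C (s : Multiset R) {b : ℕ} (hb : b ≤ card s) :
    (derivative^[b] (s.map (X + C ·)).prod).natDegree = card s - b := by
  set P := (s.map (X + C ·)).prod
  have hmonic : P.Monic := monic_multiset_prod_of_monic _ _ fun r _ => monic_X_add_C r
  have hP : P.natDegree = card s := by
    rw [natDegree_multiset_prod_of_monic _ (by simp [monic_X_add_C])]
    simp
  refine le_antisymm (hP ▸ natDegree_iterate_derivative P b) (le_natDegree_of_ne_zero ?_)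
  have hlead : P.coeff (card s) = 1 := hP ▸ hmonic.coeff_natDegree
  rw [coeff_iterate_derivative, Nat.sub_add_cancel hb, hlead, nsmul_one]
  exact_mod_cast (descFactorial_pos.2 hb).ne'

theorem coeff_reverse_iterate_derivative_prod_X_add_C (s : Multiset R) {a b : ℕ}
    (hs : card s = a + b + 2) {i j : ℕ} (hij : i + j = 2) :
    (derivative^[a] (derivative^[b] (s.map (X + C ·)).prod).reverse).coeff i
      = ((a + i).descFactorial a * (b + j).descFactorial b : R) * s.esymm (a + i) := by
  have hP : ∀ m ≤ a + b + 2, (s.map (X + C ·)).prod.coeff m = s.esymm (a + b + 2 - m) :=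
    fun m hm => by rw [prod_X_add_C_coeff s (hs ▸ hm), hs]
  rw [coeff_iterate_derivative, coeff_reverse, natDegree_iterate_derivative_prod_X_add_C s
    (by omega), hs, revAt_le (by omega), coeff_iterate_derivative, hP _ (by omega),
    add_comm i a, show a + b + 2 - b - (a + i) = j by omega, add_comm j b,
    show a + b + 2 - (b + j) = a + i by omega, nsmul_eq_mul, nsmul_eq_mul]
  ring

end CharZero

theorem esymm_mul_esymm_le_sq (s : Multiset ℝ) (k : ℕ) :
    s.esymm k * s.esymm (k + 2) ≤ s.esymm (k + 1) ^ 2 := by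
  rcases Nat.lt_or_ge (card s) (k + 2) with hlt | hge
  · rw [esymm_eq_zero_of_card_lt hlt, mul_zero]
    exact sq_nonneg _
  obtain ⟨b, hb⟩ := Nat.exists_eq_add_of_le hge
  have hs : card s = k + b + 2 := by omega
  set Q := derivative^[k] (derivative^[b] (s.map (X + C ·)).prod).reverse
  have hQ : Q.Splits :=
    ((Splits.multisetProd (by simp)).iterate_derivative b).reverse.iterate_derivative k
  have hQdeg : Q.natDegree ≤ 2 := by
    refine (natDegree_iterate_derivative _ k).trans (Nat.sub_le_of_le_add ?_)
    refine (reverse_natDegree_le _).trans ?_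
    rw [natDegree_iterate_derivative_prod_X_add_C s (by omega)]
    omega
  have hdisc := hQ.discrim_nonneg hQdeg
  rw [discrim, coeff_reverse_iterate_derivative_prod_X_add_C s hs (i := 2) (j := 0) rfl,
    coeff_reverse_iterate_derivative_prod_X_add_C s hs (i := 1) (j := 1) rfl,
    coeff_reverse_iterate_derivative_prod_X_add_C s hs (i := 0) (j := 2) rfl] at hdisc
  simp only [add_zero, descFactorial_self] at hdisc
  set α : ℝ := (k + 1).descFactorial k * (b + 1).descFactorial b
  have hα : 0 < α := by
    have hk : 0 < (k + 1).descFactorial k := descFactorial_pos.2 (by omega)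
    have hb : 0 < (b + 1).descFactorial b := descFactorial_pos.2 (by omega)
    positivity
  have hweights :
      α ^ 2 ≤ 4 * ((k + 2).descFactorial k * b ! * (k ! * (b + 2).descFactorial b)) := by
    have := Nat.mul_le_mul (descFactorial_add_one_sq_le k) (descFactorial_add_one_sq_le b)
    rw [← mul_pow] at this
    simp only [α]
    exact_mod_cast this.trans_eq (by ring)
  rcases le_or_gt (s.esymm k * s.esymm (k + 2)) 0 with hneg | hpos
  · exact hneg.trans (sq_nonneg _)
  refine le_of_mul_le_mul_left ?_ (pow_pos hα 2)
  nlinarith [mul_le_mul_of_nonneg_right hweights hpos.le]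

end Multiset

theorem esymmOn_natCast {n : ℕ} (S : Finset (Fin n)) (k : ℕ) (lam : Fin n → ℝ) :
    esymmOn S k lam = (S.val.map lam).esymm k := by
  rw [esymmOn, if_neg (by omega), Int.toNat_natCast, Finset.esymm_map_val]

theorem esymmOn_of_neg {n : ℕ} (S : Finset (Fin n)) {m : ℤ} (hm : m < 0) (lam : Fin n → ℝ) :
    esymmOn S m lam = 0 :=
  if_pos hm

theorem esymmOn_insert {n : ℕ} {S : Finset (Fin n)} {i : Fin n} (hi : i ∉ S) (m : ℤ)
    (lam : Fin n → ℝ) :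
    esymmOn (insert i S) m lam = esymmOn S m lam + lam i * esymmOn S (m - 1) lam := by
  rcases lt_or_ge m 0 with hm | hm
  · rw [esymmOn_of_neg _ hm, esymmOn_of_neg _ hm, esymmOn_of_neg _ (by omega), mul_zero, add_zero]
  lift m to ℕ using hm
  cases m with
  | zero =>
    rw [esymmOn_of_neg S (m := ((0 : ℕ) : ℤ) - 1) (by omega), mul_zero, add_zero,
      esymmOn_natCast, esymmOn_natCast, Multiset.esymm_zero, Multiset.esymm_zero]
  | succ k =>
    rw [show ((k + 1 : ℕ) : ℤ) - 1 = k by push_cast; ring, esymmOn_natCast, esymmOn_natCast,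
      esymmOn_natCast, Finset.insert_val_of_notMem hi, Multiset.map_cons,
      Multiset.esymm_cons_succ]

theorem esymmOn_mul_esymmOn_sub_two_le_sq {n : ℕ} (S : Finset (Fin n)) (m : ℤ)
    (lam : Fin n → ℝ) :
    esymmOn S m lam * esymmOn S (m - 2) lam ≤ esymmOn S (m - 1) lam ^ 2 := by
  rcases lt_or_ge (m - 2) 0 with hm | hm
  · rw [esymmOn_of_neg S hm, mul_zero]
    exact sq_nonneg _
  obtain ⟨k, rfl⟩ : ∃ k : ℕ, m = k + 2 := ⟨(m - 2).toNat, by omega⟩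
  rw [show (k : ℤ) + 2 = (k + 2 : ℕ) by push_cast; ring, show ((k + 2 : ℕ) : ℤ) - 2 = k by
    push_cast; ring, show ((k + 2 : ℕ) : ℤ) - 1 = (k + 1 : ℕ) by push_cast; ring,
    esymmOn_natCast, esymmOn_natCast, esymmOn_natCast, mul_comm]
  exact Multiset.esymm_mul_esymm_le_sq _ k

theorem newton_type_identity_general {n : ℕ} (l : ℕ) (lam : Fin n → ℝ) (p q : Fin n) (hpq : p ≠ q) :
    esymmOn ({p}ᶜ : Finset (Fin n)) ((l : ℤ) - 1) lam *
          esymmOn ({q}ᶜ : Finset (Fin n)) ((l : ℤ) - 1) lam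
        - esymm (l : ℤ) lam * esymmOn ({p, q}ᶜ : Finset (Fin n)) ((l : ℤ) - 2) lam
      = (esymmOn ({p, q}ᶜ : Finset (Fin n)) ((l : ℤ) - 1) lam) ^ 2
        - esymmOn ({p, q}ᶜ : Finset (Fin n)) (l : ℤ) lam *
            esymmOn ({p, q}ᶜ : Finset (Fin n)) ((l : ℤ) - 2) lam
    ∧ 0 ≤ (esymmOn ({p, q}ᶜ : Finset (Fin n)) ((l : ℤ) - 1) lam) ^ 2
        - esymmOn ({p, q}ᶜ : Finset (Fin n)) (l : ℤ) lam *
            esymmOn ({p, q}ᶜ : Finset (Fin n)) ((l : ℤ) - 2) lam := by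
  set T : Finset (Fin n) := {p, q}ᶜ
  have hpT : p ∉ T := by simp [T]
  have hqT : q ∉ T := by simp [T]
  have hpqT : p ∉ insert q T := by simp [T, hpq]
  have hp : ({p}ᶜ : Finset (Fin n)) = insert q T := by ext x; simp [T]; grind
  have hq : ({q}ᶜ : Finset (Fin n)) = insert p T := by ext x; simp [T]; grind
  have huniv : (univ : Finset (Fin n)) = insert p (insert q T) := by ext x; simp [T]; grind
  refine ⟨?_, sub_nonneg.2 (esymmOn_mul_esymmOn_sub_two_le_sq T l lam)⟩
  rw [esymm, hp, hq, huniv, esymmOn_insert hpqT, esymmOn_insert hqT, esymmOn_insert hqT,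
    esymmOn_insert hpT, sub_sub, one_add_one_eq_two]
  ring

theorem newton_type_identity {n : ℕ} (l : ℕ) (hl : 2 ≤ l) (hln : l ≤ n)
    (lam : Fin n → ℝ) (hG : GammaCone l lam) (p q : Fin n) (hpq : p ≠ q) :
    esymmOn ({p}ᶜ : Finset (Fin n)) ((l : ℤ) - 1) lam *
          esymmOn ({q}ᶜ : Finset (Fin n)) ((l : ℤ) - 1) lam
        - esymm (l : ℤ) lam * esymmOn ({p, q}ᶜ : Finset (Fin n)) ((l : ℤ) - 2) lam
      = (esymmOn ({p, q}ᶜ : Finset (Fin n)) ((l : ℤ) - 1) lam) ^ 2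
        - esymmOn ({p, q}ᶜ : Finset (Fin n)) (l : ℤ) lam *
            esymmOn ({p, q}ᶜ : Finset (Fin n)) ((l : ℤ) - 2) lam
    ∧ 0 ≤ (esymmOn ({p, q}ᶜ : Finset (Fin n)) ((l : ℤ) - 1) lam) ^ 2
        - esymmOn ({p, q}ᶜ : Finset (Fin n)) (l : ℤ) lam *
            esymmOn ({p, q}ᶜ : Finset (Fin n)) ((l : ℤ) - 2) lam :=
  newton_type_identity_general l lam p q hpq
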